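/- arXiv:1812.01927 — 3 statements merged into one kernel-verified Lean document; each statement's English description precedes it below -/
import Mathlib

section
/- For n ≡ 2 or 3 (mod 4) and any 0 ≤ k ≤ n-1, the number of even permutations of [n] with k descents equals the number of odd permutations of [n] with n-1-k descents. -/
open Finset

/-- number of descents of a permutation of `Fin n` (one-line notation). -/
def desA {n : ℕ} (π : Equiv.Perm (Fin n)) : ℕ :=
  (Finset.univ.filter (fun i : Fin (n-1) =>
    π ⟨i.1+1, by have := i.2; omega⟩ < π ⟨i.1, by have := i.2; omega⟩)).card

/-- number of ascents. -/
def ascA {n : ℕ} (π : Equiv.Perm (Fin n)) : ℕ :=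
  (Finset.univ.filter (fun i : Fin (n-1) =>
    π ⟨i.1, by have := i.2; omega⟩ < π ⟨i.1+1, by have := i.2; omega⟩)).card

/-- number of inversions. -/
def invA {n : ℕ} (π : Equiv.Perm (Fin n)) : ℕ :=
  (Finset.univ.filter (fun p : Fin n × Fin n => p.1 < p.2 ∧ π p.2 < π p.1)).card

/-- bivariate Eulerian polynomial over all of `S_n`; variable 0 is `s`, variable 1 is `t`. -/
noncomputable def Abiv (n : ℕ) : MvPolynomial (Fin 2) ℚ :=
  ∑ π : Equiv.Perm (Fin n), MvPolynomial.X 1 ^ desA π * MvPolynomial.X 0 ^ ascA π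

noncomputable def AbivP (n : ℕ) : MvPolynomial (Fin 2) ℚ :=
  ∑ π ∈ Finset.univ.filter (fun π : Equiv.Perm (Fin n) => Equiv.Perm.sign π = 1),
    MvPolynomial.X 1 ^ desA π * MvPolynomial.X 0 ^ ascA π

noncomputable def AbivM (n : ℕ) : MvPolynomial (Fin 2) ℚ :=
  ∑ π ∈ Finset.univ.filter (fun π : Equiv.Perm (Fin n) => Equiv.Perm.sign π = -1),
    MvPolynomial.X 1 ^ desA π * MvPolynomial.X 0 ^ ascA π

noncomputable def Auni (n : ℕ) : Polynomial ℚ :=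
  ∑ π : Equiv.Perm (Fin n), Polynomial.X ^ desA π

noncomputable def AuniP (n : ℕ) : Polynomial ℚ :=
  ∑ π ∈ Finset.univ.filter (fun π : Equiv.Perm (Fin n) => Equiv.Perm.sign π = 1),
    Polynomial.X ^ desA π

noncomputable def AuniM (n : ℕ) : Polynomial ℚ :=
  ∑ π ∈ Finset.univ.filter (fun π : Equiv.Perm (Fin n) => Equiv.Perm.sign π = -1),
    Polynomial.X ^ desA π

/-- the operator `∂/∂s + ∂/∂t`. -/
noncomputable def Dop (f : MvPolynomial (Fin 2) ℚ) : MvPolynomial (Fin 2) ℚ :=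
  MvPolynomial.pderiv 0 f + MvPolynomial.pderiv 1 f

/-- A univariate polynomial is palindromic: with `r` the least exponent with nonzero
coefficient and `n` the degree, `a_{r+i} = a_{n-i}`. -/
def Palind (f : Polynomial ℚ) : Prop :=
  ∀ i ≤ f.natDegree - f.natTrailingDegree,
    f.coeff (f.natTrailingDegree + i) = f.coeff (f.natDegree - i)

/-- bivariate gamma positivity with center of symmetry `N/2`. -/
def BivGamma (f : MvPolynomial (Fin 2) ℚ) (N : ℕ) : Prop :=
  ∃ γ : ℕ → ℕ, (∀ i, γ i ≠ 0 → 2*i ≤ N) ∧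
    f = ∑ i ∈ Finset.range (N+1), (γ i : MvPolynomial (Fin 2) ℚ) *
      ((MvPolynomial.X 0 * MvPolynomial.X 1)^i * (MvPolynomial.X 0 + MvPolynomial.X 1)^(N - 2*i))

/-- univariate gamma positivity with center of symmetry `c2/2`. -/
def UniGamma (f : Polynomial ℚ) (c2 : ℕ) : Prop :=
  ∃ γ : ℕ → ℕ, (∀ i, γ i ≠ 0 → 2*i ≤ c2) ∧
    f = ∑ i ∈ Finset.range (c2+1), (γ i : ℚ) •
      (Polynomial.X^i * (1 + Polynomial.X)^(c2 - 2*i))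

/-- signed permutations: a permutation together with a sign for each position. -/
abbrev SignedPerm (n : ℕ) := Equiv.Perm (Fin n) × (Fin n → Bool)

/-- the one-line word of a signed permutation, 1-indexed, with `bw w 0 = 0`;
entry `i` is `±(w.1 i + 1)` viewed in `{-n,…,-1,1,…,n}`. -/
def bw {n : ℕ} (w : SignedPerm n) (i : ℕ) : ℤ :=
  if h : 1 ≤ i ∧ i ≤ n then
    (if w.2 ⟨i-1, by omega⟩ then -(((w.1 ⟨i-1, by omega⟩ : ℕ) : ℤ) + 1)
     else ((w.1 ⟨i-1, by omega⟩ : ℕ) : ℤ) + 1)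
  else 0

/-- type-B descents (including a possible descent at position 0). -/
def desB {n : ℕ} (w : SignedPerm n) : ℕ :=
  ((Finset.range n).filter (fun i => bw w (i+1) < bw w i)).card

/-- type-B inversions (length). -/
def invB {n : ℕ} (w : SignedPerm n) : ℕ :=
  (Finset.univ.filter (fun p : Fin n × Fin n => p.1 < p.2 ∧ bw w (p.2.1+1) < bw w (p.1.1+1))).card
  + (Finset.univ.filter (fun p : Fin n × Fin n => p.1 < p.2 ∧ bw w (p.2.1+1) < -(bw w (p.1.1+1)))).card
  + (Finset.univ.filter (fun i : Fin n => bw w (i.1+1) < 0)).card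

/-- type-D inversions. -/
def invD {n : ℕ} (w : SignedPerm n) : ℕ :=
  (Finset.univ.filter (fun p : Fin n × Fin n => p.1 < p.2 ∧ bw w (p.2.1+1) < bw w (p.1.1+1))).card
  + (Finset.univ.filter (fun p : Fin n × Fin n => p.1 < p.2 ∧ bw w (p.2.1+1) < -(bw w (p.1.1+1)))).card

noncomputable def Bbiv (n : ℕ) : MvPolynomial (Fin 2) ℚ :=
  ∑ w : SignedPerm n, MvPolynomial.X 1 ^ desB w * MvPolynomial.X 0 ^ (n - desB w)

noncomputable def BbivP (n : ℕ) : MvPolynomial (Fin 2) ℚ :=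
  ∑ w ∈ Finset.univ.filter (fun w : SignedPerm n => Even (invB w)),
    MvPolynomial.X 1 ^ desB w * MvPolynomial.X 0 ^ (n - desB w)

noncomputable def BbivM (n : ℕ) : MvPolynomial (Fin 2) ℚ :=
  ∑ w ∈ Finset.univ.filter (fun w : SignedPerm n => ¬ Even (invB w)),
    MvPolynomial.X 1 ^ desB w * MvPolynomial.X 0 ^ (n - desB w)

noncomputable def BuniP (n : ℕ) : Polynomial ℚ :=
  ∑ w ∈ Finset.univ.filter (fun w : SignedPerm n => Even (invB w)), Polynomial.X ^ desB w

noncomputable def BuniM (n : ℕ) : Polynomial ℚ :=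
  ∑ w ∈ Finset.univ.filter (fun w : SignedPerm n => ¬ Even (invB w)), Polynomial.X ^ desB w

/-- deleting the largest letter from the one-line notation of `π ∈ S_{n+1}`
gives a permutation of `[n]`. -/
noncomputable def restrictMax {n : ℕ} (π : Equiv.Perm (Fin (n+1))) : Equiv.Perm (Fin n) :=
  Equiv.ofBijective
    (fun i => Fin.castPred (π ((π.symm (Fin.last n)).succAbove i))
      (by
        intro h
        have h2 : (π.symm (Fin.last n)).succAbove i = π.symm (Fin.last n) := by
          apply π.injective
          rw [h, Equiv.apply_symm_apply]
        exact Fin.succAbove_ne _ i h2))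
    (Finite.injective_iff_bijective.mp (by
      intro i j h
      have h2 : π ((π.symm (Fin.last n)).succAbove i) = π ((π.symm (Fin.last n)).succAbove j) :=
        Fin.castPred_inj.mp h
      have h3 := π.injective h2
      exact Fin.succAbove_right_injective h3))

/-- number of even permutations of `[n]` with `k` descents (`k : ℤ`). -/
noncomputable def aP (n : ℕ) (k : ℤ) : ℕ :=
  (Finset.univ.filter (fun π : Equiv.Perm (Fin n) =>
    Equiv.Perm.sign π = 1 ∧ (desA π : ℤ) = k)).card

/-- number of odd permutations of `[n]` with `k` descents. -/
noncomputable def aM (n : ℕ) (k : ℤ) : ℕ :=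
  (Finset.univ.filter (fun π : Equiv.Perm (Fin n) =>
    Equiv.Perm.sign π = -1 ∧ (desA π : ℤ) = k)).card

/-! Reading a permutation backwards, `π ↦ π * Fin.revPerm`, turns its ascents into descents, so it
sends `des = k` to `des = n - 1 - k`. The reversal itself has sign `(-1) ^ ⌊n/2⌋`, so it is odd
exactly when `n ≡ 2, 3 (mod 4)`, and then the same map exchanges even and odd permutations. -/

open Equiv

theorem Fin.finRotate_mul_revPerm (n : ℕ) :
    finRotate (n + 1) * Fin.revPerm = Perm.decomposeFin.symm (0, Fin.revPerm) := by
  ext i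
  refine Fin.cases ?_ (fun j => ?_) i
  · simp
  · simp [Fin.rev, Fin.val_add_one, Fin.ext_iff]
    omega

theorem Fin.sign_revPerm (n : ℕ) :
    Perm.sign (Fin.revPerm : Perm (Fin n)) = (-1) ^ (n / 2) := by
  induction n with
  | zero => rfl
  | succ n ih =>
    have h := congrArg Perm.sign (Fin.finRotate_mul_revPerm n)
    rw [Perm.sign_mul, Perm.decomposeFin.symm_sign, ih, sign_finRotate, if_pos rfl, one_mul,
      Nat.succ_sub_one] at h
    calc Perm.sign (Fin.revPerm : Perm (Fin (n + 1)))
        = (-1) ^ n * ((-1) ^ n * Perm.sign Fin.revPerm) := by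
          rw [← mul_assoc, ← pow_add, ← two_mul, pow_mul, neg_one_sq, one_pow, one_mul]
      _ = (-1) ^ ((n + 1) / 2) := by
          rw [h, ← pow_add]
          refine neg_one_pow_congr ?_
          simp only [Nat.even_iff]
          rcases Nat.even_or_odd n with ⟨m, rfl⟩ | ⟨m, rfl⟩ <;> omega

theorem desA_mul_revPerm {n : ℕ} (π : Perm (Fin n)) : desA (π * Fin.revPerm) = ascA π := by
  unfold desA ascA
  refine card_equiv Fin.revPerm fun i => ?_
  simp only [mem_filter, mem_univ, true_and, Perm.mul_apply, Fin.revPerm_apply]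
  have := i.isLt
  congr! 2 <;> ext <;> simp only [Fin.val_rev] <;> omega

theorem ascA_add_desA {n : ℕ} (π : Perm (Fin n)) : ascA π + desA π = n - 1 := by
  have h := card_filter_add_card_filter_not (s := Finset.univ)
    (fun i : Fin (n - 1) => π ⟨i + 1, by omega⟩ < π ⟨i, by omega⟩)
  rw [card_univ, Fintype.card_fin] at h
  refine (add_comm _ _).trans (Eq.trans ?_ h)
  unfold ascA desA
  congr 2
  ext i
  simp only [mem_filter, mem_univ, true_and, not_lt]
  exact ⟨le_of_lt, fun hle => hle.lt_of_ne (π.injective.ne (by simp [Fin.ext_iff]))⟩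

theorem even_des_k_eq_odd_des_compl (n k : ℕ) (hn : n % 4 = 2 ∨ n % 4 = 3)
    (hk : k ≤ n - 1) :
    (Finset.univ.filter (fun π : Equiv.Perm (Fin n) =>
      Equiv.Perm.sign π = 1 ∧ desA π = k)).card =
    (Finset.univ.filter (fun π : Equiv.Perm (Fin n) =>
      Equiv.Perm.sign π = -1 ∧ desA π = n - 1 - k)).card := by
  have sign_rev : Perm.sign (Fin.revPerm : Perm (Fin n)) = -1 := by
    rw [Fin.sign_revPerm]
    exact Odd.neg_one_pow (Nat.odd_iff.mpr (by omega))
  refine card_equiv (Equiv.mulRight Fin.revPerm) fun π => ?_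
  have hasc := ascA_add_desA π
  simp only [mem_filter, mem_univ, true_and, coe_mulRight, Perm.sign_mul, sign_rev,
    mul_neg_one, neg_inj, desA_mul_revPerm]
  exact and_congr_right fun _ => by omega
end

section
/- In the gamma expansion A_n(s,t) = Σ_{π ∈ S_n} t^{des(π)} s^{asc(π)} = Σ_{i=0}^{⌊(n-1)/2⌋} γ_{n,i} (st)^i (s+t)^{n-1-2i}, the coefficients satisfy the recurrence γ_{n+1,i} = (i+1)γ_{n,i} + 2(n+1-2i)γ_{n,i-1}, and consequently γ_{n,0} = 1 for all n and γ_{n,i} is even for all i ≥ 1. -/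
open Finset

/-! ### insertion of the max -/

def EE {m : ℕ} (p : Fin (m+2)) (σ : Equiv.Perm (Fin (m+1))) : Equiv.Perm (Fin (m+2)) :=
  (finSuccEquiv' p).trans ((Equiv.optionCongr σ).trans (finSuccEquiv' (Fin.last (m+1))).symm)

lemma EE_at {m : ℕ} (p : Fin (m+2)) (σ : Equiv.Perm (Fin (m+1))) : EE p σ p = Fin.last (m+1) := by
  simp [EE, finSuccEquiv'_at, finSuccEquiv'_symm_none]

lemma EE_succAbove {m : ℕ} (p : Fin (m+2)) (σ : Equiv.Perm (Fin (m+1))) (j : Fin (m+1)) :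
    EE p σ (p.succAbove j) = (σ j).castSucc := by
  simp [EE, finSuccEquiv'_succAbove, finSuccEquiv'_symm_some, Fin.succAbove_last]

lemma EE_lt {m : ℕ} (p : Fin (m+2)) (σ : Equiv.Perm (Fin (m+1))) (i : Fin (m+2)) (h : i.1 < p.1) :
    EE p σ i = (σ ⟨i.1, by omega⟩).castSucc := by
  have : i = p.succAbove ⟨i.1, by omega⟩ := by
    rw [Fin.succAbove_of_castSucc_lt]
    · rfl
    · exact h
  conv_lhs => rw [this]
  rw [EE_succAbove]

lemma EE_gt {m : ℕ} (p : Fin (m+2)) (σ : Equiv.Perm (Fin (m+1))) (i : Fin (m+2)) (h : p.1 < i.1) :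
    EE p σ i = (σ ⟨i.1 - 1, by omega⟩).castSucc := by
  have : i = p.succAbove ⟨i.1 - 1, by omega⟩ := by
    rw [Fin.succAbove_of_le_castSucc]
    · exact Fin.ext (by simp [Fin.succ]; omega)
    · exact (by simp [Fin.le_def]; omega)
  conv_lhs => rw [this]
  rw [EE_succAbove]

/-! ### value function and descents in ℕ terms -/

def sval {m : ℕ} (σ : Equiv.Perm (Fin (m+1))) (j : ℕ) : ℕ :=
  if h : j < m+1 then (σ ⟨j, h⟩).1 else 0

lemma sval_eq {m : ℕ} (σ : Equiv.Perm (Fin (m+1))) (j : ℕ) (h : j < m+1) :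
    sval σ j = (σ ⟨j, h⟩).1 := by
  unfold sval; rw [dif_pos h]

lemma sval_lt {m : ℕ} (σ : Equiv.Perm (Fin (m+1))) (j : ℕ) : sval σ j < m+1 := by
  unfold sval
  split
  · exact (σ _).2
  · omega

def sdesc {m : ℕ} (σ : Equiv.Perm (Fin (m+1))) (j : ℕ) : Prop :=
  j < m ∧ sval σ (j+1) < sval σ j

instance {m : ℕ} (σ : Equiv.Perm (Fin (m+1))) (j : ℕ) : Decidable (sdesc σ j) := by
  unfold sdesc; infer_instance

def condP {m : ℕ} (p : Fin (m+2)) (σ : Equiv.Perm (Fin (m+1))) : Prop :=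
  1 ≤ p.1 ∧ (p.1 = m+1 ∨ sdesc σ (p.1-1))

instance {m : ℕ} (p : Fin (m+2)) (σ : Equiv.Perm (Fin (m+1))) : Decidable (condP p σ) := by
  unfold condP; infer_instance

lemma desA_eq_sdesc {m : ℕ} (σ : Equiv.Perm (Fin (m+1))) :
    desA σ = (univ.filter (fun j : Fin m => sdesc σ j.1)).card := by
  classical
  unfold desA
  congr 1
  apply Finset.filter_congr
  intro j _
  have hb := j.2
  constructor
  · intro h
    refine ⟨hb, ?_⟩
    rw [sval_eq σ (j.1+1) (by omega), sval_eq σ j.1 (by omega)]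
    exact h
  · rintro ⟨-, h⟩
    rw [sval_eq σ (j.1+1) (by omega), sval_eq σ j.1 (by omega)] at h
    exact h

set_option maxHeartbeats 1600000 in
lemma descEE_iff {m : ℕ} (p : Fin (m+2)) (σ : Equiv.Perm (Fin (m+1))) (i : Fin (m+1)) :
    (EE p σ ⟨i.1+1, by omega⟩ < EE p σ ⟨i.1, by omega⟩) ↔
      (i.1 = p.1 ∨ (i.1+1 < p.1 ∧ sdesc σ i.1) ∨ (p.1 < i.1 ∧ sdesc σ (i.1-1))) := by
  have hi2 := i.2
  have hp2 := p.2
  rw [Fin.lt_def]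
  rcases lt_trichotomy i.1 p.1 with h | h | h
  · rcases eq_or_lt_of_le (Nat.succ_le_of_lt h) with h1 | h1
    · -- i+1 = p : ascent into the max
      have e1 : (EE p σ ⟨i.1, by omega⟩).1 = sval σ i.1 := by
        rw [EE_lt p σ ⟨i.1, by omega⟩ h, Fin.coe_castSucc, sval_eq σ i.1 (by omega)]
      have e2 : (⟨i.1+1, by omega⟩ : Fin (m+2)) = p := Fin.ext h1
      rw [e1, e2, EE_at]
      have := sval_lt σ i.1
      simp only [Fin.val_last]
      constructor
      · intro hlt; omega
      · rintro (hc | ⟨hc, _⟩ | ⟨hc, _⟩) <;> omega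
    · -- i+1 < p : both below
      have e1 : (EE p σ ⟨i.1, by omega⟩).1 = sval σ i.1 := by
        rw [EE_lt p σ ⟨i.1, by omega⟩ h, Fin.coe_castSucc, sval_eq σ i.1 (by omega)]
      have e2 : (EE p σ ⟨i.1+1, by omega⟩).1 = sval σ (i.1+1) := by
        rw [EE_lt p σ ⟨i.1+1, by omega⟩ h1, Fin.coe_castSucc, sval_eq σ (i.1+1) (by omega)]
      rw [e1, e2]
      constructor
      · intro hlt
        exact Or.inr (Or.inl ⟨h1, by omega, hlt⟩)
      · rintro (hc | ⟨-, -, hc⟩ | ⟨hc, -⟩)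
        · omega
        · exact hc
        · omega
  · -- i = p : descent at the max
    have e1 : (⟨i.1, by omega⟩ : Fin (m+2)) = p := Fin.ext h
    have e2 : (EE p σ ⟨i.1+1, by omega⟩).1 = sval σ i.1 := by
      rw [EE_gt p σ ⟨i.1+1, by omega⟩ (show p.1 < i.1+1 by omega), Fin.coe_castSucc,
        ← sval_eq σ (i.1+1-1) (by omega)]
      exact congrArg (sval σ) (show i.1+1-1 = i.1 by omega)
    have := sval_lt σ i.1
    rw [e1, EE_at, e2]
    simp only [Fin.val_last]
    constructor
    · intro _; exact Or.inl h
    · intro _; omega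
  · -- p < i : both above
    have e1 : (EE p σ ⟨i.1, by omega⟩).1 = sval σ (i.1-1) := by
      rw [EE_gt p σ ⟨i.1, by omega⟩ h, Fin.coe_castSucc, sval_eq σ (i.1-1) (by omega)]
    have e2 : (EE p σ ⟨i.1+1, by omega⟩).1 = sval σ i.1 := by
      rw [EE_gt p σ ⟨i.1+1, by omega⟩ (show p.1 < i.1+1 by omega), Fin.coe_castSucc,
        ← sval_eq σ (i.1+1-1) (by omega)]
      exact congrArg (sval σ) (show i.1+1-1 = i.1 by omega)
    rw [e1, e2]
    have e3 : i.1 - 1 + 1 = i.1 := by omega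
    constructor
    · intro hlt
      refine Or.inr (Or.inr ⟨h, by omega, ?_⟩)
      rw [e3]; exact hlt
    · rintro (hc | ⟨hc, -⟩ | ⟨-, -, hc⟩)
      · omega
      · omega
      · rw [e3] at hc; exact hc

lemma desA_EE_card {m : ℕ} (p : Fin (m+2)) (σ : Equiv.Perm (Fin (m+1))) :
    desA (EE p σ) = (univ.filter (fun i : Fin (m+1) =>
      i.1 = p.1 ∨ (i.1+1 < p.1 ∧ sdesc σ i.1) ∨ (p.1 < i.1 ∧ sdesc σ (i.1-1)))).card := by
  classical
  unfold desA
  congr 1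
  apply Finset.filter_congr
  intro i _
  exact descEE_iff p σ i

lemma sdesc_bound {m : ℕ} {σ : Equiv.Perm (Fin (m+1))} {j : ℕ} (h : sdesc σ j) : j < m := h.1

lemma desA_le {m : ℕ} (σ : Equiv.Perm (Fin (m+1))) : desA σ ≤ m := by
  classical
  rw [desA_eq_sdesc]
  exact le_trans (Finset.card_filter_le _ _) (by simp)

lemma ascA_eq_sasc {m : ℕ} (σ : Equiv.Perm (Fin (m+1))) :
    ascA σ = (univ.filter (fun j : Fin m => sval σ j.1 < sval σ (j.1+1))).card := by
  classical
  unfold ascA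
  congr 1
  apply Finset.filter_congr
  intro j _
  have hb := j.2
  rw [sval_eq σ (j.1+1) (by omega), sval_eq σ j.1 (by omega)]
  exact Fin.lt_def

lemma sval_ne {m : ℕ} (σ : Equiv.Perm (Fin (m+1))) (j : ℕ) (h : j < m) :
    sval σ (j+1) ≠ sval σ j := by
  rw [sval_eq σ (j+1) (by omega), sval_eq σ j (by omega)]
  intro hh
  have h2 : σ ⟨j+1, by omega⟩ = σ ⟨j, by omega⟩ := Fin.ext hh
  have h3 := σ.injective h2
  have h4 : j + 1 = j := congrArg Fin.val h3
  omega

lemma ascA_eq {m : ℕ} (σ : Equiv.Perm (Fin (m+1))) : ascA σ = m - desA σ := by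
  classical
  rw [ascA_eq_sasc, desA_eq_sdesc]
  have h2 := Finset.card_filter_add_card_filter_not
    (s := (univ : Finset (Fin m))) (fun j : Fin m => sdesc σ j.1)
  rw [Finset.card_univ, Fintype.card_fin] at h2
  have h3 : (univ.filter (fun j : Fin m => ¬ sdesc σ j.1)).card
      = (univ.filter (fun j : Fin m => sval σ j.1 < sval σ (j.1+1))).card := by
    congr 1
    apply Finset.filter_congr
    intro j _
    have hb := j.2
    have hne := sval_ne σ j.1 hb
    unfold sdesc
    constructor
    · intro hh; omega
    · intro hh; omega
  omega

lemma desA_le' {n : ℕ} (π : Equiv.Perm (Fin n)) : desA π ≤ n - 1 := by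
  classical
  unfold desA
  exact le_trans (Finset.card_filter_le _ _) (by simp)

set_option maxHeartbeats 1600000 in
lemma desA_EE_of_cond {m : ℕ} (p : Fin (m+2)) (σ : Equiv.Perm (Fin (m+1)))
    (hc : condP p σ) : desA (EE p σ) = desA σ := by
  classical
  rw [desA_EE_card, desA_eq_sdesc]
  have hp2 := p.2
  have hc1 := hc.1
  refine Finset.card_bij'
    (fun i hi => (⟨if i.1 < p.1 then i.1 else i.1 - 1, by
      have hi2 := i.2
      rcases (Finset.mem_filter.mp hi).2 with h | ⟨h1, h2⟩ | ⟨h1, h2⟩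
      · rcases hc.2 with hq | hq
        · split_ifs <;> omega
        · have := sdesc_bound hq; split_ifs <;> omega
      · have := sdesc_bound h2; split_ifs <;> omega
      · have := sdesc_bound h2; split_ifs <;> omega⟩ : Fin m))
    (fun j hj => (⟨if j.1+1 < p.1 then j.1 else j.1 + 1, by have := j.2; split_ifs <;> omega⟩ :
      Fin (m+1)))
    ?_ ?_ ?_ ?_
  · intro i hi
    simp only [Finset.mem_filter, Finset.mem_univ, true_and] at hi ⊢
    rcases hi with h | ⟨h1, h2⟩ | ⟨h1, h2⟩
    · rw [if_neg (by omega)]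
      rcases hc.2 with hq | hq
      · exfalso; have := i.2; omega
      · rw [h]; exact hq
    · rw [if_pos (by omega)]; exact h2
    · rw [if_neg (by omega)]; exact h2
  · intro j hj
    simp only [Finset.mem_filter, Finset.mem_univ, true_and] at hj ⊢
    have hjm := sdesc_bound hj
    by_cases hcmp : j.1 + 1 < p.1
    · rw [if_pos hcmp]
      exact Or.inr (Or.inl ⟨hcmp, hj⟩)
    · rw [if_neg hcmp]
      rcases eq_or_lt_of_le (not_lt.mp hcmp) with he | hl
      · exact Or.inl (by omega)
      · refine Or.inr (Or.inr ⟨hl, ?_⟩)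
        have e : j.1 + 1 - 1 = j.1 := by omega
        rw [e]; exact hj
  · intro i hi
    simp only [Finset.mem_filter, Finset.mem_univ, true_and] at hi
    apply Fin.ext
    simp only [Fin.val_mk]
    rcases hi with h | ⟨h1, h2⟩ | ⟨h1, h2⟩ <;> split_ifs <;> omega
  · intro j hj
    simp only [Finset.mem_filter, Finset.mem_univ, true_and] at hj
    have hjm := sdesc_bound hj
    apply Fin.ext
    simp only [Fin.val_mk]
    split_ifs <;> omega

set_option maxHeartbeats 1600000 in
lemma desA_EE_of_not {m : ℕ} (p : Fin (m+2)) (σ : Equiv.Perm (Fin (m+1)))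
    (hc : ¬ condP p σ) : desA (EE p σ) = desA σ + 1 := by
  classical
  rw [desA_EE_card, desA_eq_sdesc]
  have hp2 := p.2
  have hple : p.1 ≤ m := by
    by_contra hlt
    exact hc ⟨by omega, Or.inl (by omega)⟩
  have hpin : (⟨p.1, by omega⟩ : Fin (m+1)) ∈ univ.filter (fun i : Fin (m+1) =>
      i.1 = p.1 ∨ (i.1+1 < p.1 ∧ sdesc σ i.1) ∨ (p.1 < i.1 ∧ sdesc σ (i.1-1))) := by
    refine Finset.mem_filter.mpr ⟨Finset.mem_univ _, ?_⟩
    exact Or.inl rfl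
  rw [← Finset.card_erase_add_one hpin]
  congr 1
  refine (Finset.card_bij'
    (fun j hj => (⟨if j.1+1 < p.1 then j.1 else j.1 + 1, by have := j.2; split_ifs <;> omega⟩ :
      Fin (m+1)))
    (fun i hi => (⟨if i.1 < p.1 then i.1 else i.1 - 1, by
      have hi2 := i.2
      have hne : i.1 ≠ p.1 := by
        intro hh
        exact (Finset.mem_erase.mp hi).1 (Fin.ext hh)
      rcases (Finset.mem_filter.mp (Finset.mem_erase.mp hi).2).2 with h | ⟨h1, h2⟩ | ⟨h1, h2⟩
      · omega
      · have := sdesc_bound h2; split_ifs <;> omega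
      · have := sdesc_bound h2; split_ifs <;> omega⟩ : Fin m))
    ?_ ?_ ?_ ?_).symm
  · intro j hj
    simp only [Finset.mem_filter, Finset.mem_univ, true_and] at hj
    have hjm := sdesc_bound hj
    have hne : j.1 + 1 ≠ p.1 := by
      intro hh
      apply hc
      refine ⟨by omega, Or.inr ?_⟩
      have e : p.1 - 1 = j.1 := by omega
      rw [e]; exact hj
    rw [Finset.mem_erase]
    constructor
    · intro hh
      have := congrArg Fin.val hh
      simp only [Fin.val_mk] at this
      split_ifs at this <;> omega
    · simp only [Finset.mem_filter, Finset.mem_univ, true_and, Fin.val_mk]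
      by_cases hcmp : j.1 + 1 < p.1
      · rw [if_pos hcmp]
        exact Or.inr (Or.inl ⟨hcmp, hj⟩)
      · rw [if_neg hcmp]
        refine Or.inr (Or.inr ⟨by omega, ?_⟩)
        have e : j.1 + 1 - 1 = j.1 := by omega
        rw [e]; exact hj
  · intro i hi
    have hne : i.1 ≠ p.1 := by
      intro hh
      exact (Finset.mem_erase.mp hi).1 (Fin.ext hh)
    simp only [Finset.mem_erase, Finset.mem_filter, Finset.mem_univ, true_and] at hi
    rcases hi.2 with h | ⟨h1, h2⟩ | ⟨h1, h2⟩
    · omega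
    · simp only [Finset.mem_filter, Finset.mem_univ, true_and, Fin.val_mk]
      rw [if_pos (by omega)]; exact h2
    · simp only [Finset.mem_filter, Finset.mem_univ, true_and, Fin.val_mk]
      rw [if_neg (by omega)]; exact h2
  · intro j hj
    simp only [Finset.mem_filter, Finset.mem_univ, true_and] at hj
    have hjm := sdesc_bound hj
    have hne : j.1 + 1 ≠ p.1 := by
      intro hh
      apply hc
      refine ⟨by omega, Or.inr ?_⟩
      have e : p.1 - 1 = j.1 := by omega
      rw [e]; exact hj
    apply Fin.ext
    simp only [Fin.val_mk]
    split_ifs <;> omega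
  · intro i hi
    have hne : i.1 ≠ p.1 := by
      intro hh
      exact (Finset.mem_erase.mp hi).1 (Fin.ext hh)
    simp only [Finset.mem_erase, Finset.mem_filter, Finset.mem_univ, true_and] at hi
    apply Fin.ext
    simp only [Fin.val_mk]
    rcases hi.2 with h | ⟨h1, h2⟩ | ⟨h1, h2⟩ <;> split_ifs <;> omega

set_option maxHeartbeats 1600000 in
lemma card_condP {m : ℕ} (σ : Equiv.Perm (Fin (m+1))) :
    (univ.filter (fun p : Fin (m+2) => condP p σ)).card = desA σ + 1 := by
  classical
  rw [desA_eq_sdesc]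
  have h : (univ.filter (fun p : Fin (m+2) => condP p σ))
      = insert (Fin.last (m+1)) ((univ.filter (fun j : Fin m => sdesc σ j.1)).image
          (fun j => (⟨j.1+1, by have := j.2; omega⟩ : Fin (m+2)))) := by
    ext q
    simp only [Finset.mem_filter, Finset.mem_univ, true_and, Finset.mem_insert,
      Finset.mem_image]
    constructor
    · rintro ⟨h1, h2 | h2⟩
      · left; exact Fin.ext (by simpa using h2)
      · right
        have hb := sdesc_bound h2
        refine ⟨⟨q.1-1, by omega⟩, h2, ?_⟩
        exact Fin.ext (by simp [Fin.val_mk]; omega)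
    · rintro (h1 | ⟨j, hj, hj2⟩)
      · subst h1
        exact ⟨by simp [Fin.last], Or.inl (by simp [Fin.last])⟩
      · subst hj2
        refine ⟨by simp, Or.inr ?_⟩
        simp only [Fin.val_mk, Nat.add_sub_cancel]
        exact hj
  rw [h, Finset.card_insert_of_notMem, Finset.card_image_of_injective]
  · intro a b hab
    have := congrArg Fin.val hab
    simp only [Fin.val_mk] at this
    exact Fin.ext (by omega)
  · simp only [Finset.mem_image]
    rintro ⟨j, hj, hj2⟩
    have := congrArg Fin.val hj2
    have hb := j.2
    simp only [Fin.val_mk, Fin.val_last] at this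
    omega

lemma EE_bijective {m : ℕ} :
    Function.Bijective (fun x : Fin (m+2) × Equiv.Perm (Fin (m+1)) => EE x.1 x.2) := by
  rw [Fintype.bijective_iff_injective_and_card]
  constructor
  · rintro ⟨p, σ⟩ ⟨q, τ⟩ h
    simp only at h
    have hpq : p = q := by
      apply (EE q τ).injective
      rw [EE_at, ← h, EE_at]
    subst hpq
    have hστ : σ = τ := by
      apply Equiv.ext
      intro j
      have h1 : (σ j).castSucc = (τ j).castSucc := by
        rw [← EE_succAbove p σ j, ← EE_succAbove p τ j, h]
      exact Fin.castSucc_injective _ h1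
    rw [hστ]
  · simp only [Fintype.card_prod, Fintype.card_perm, Fintype.card_fin]
    rw [Nat.factorial_succ (m+1), Nat.factorial_succ m]

open MvPolynomial in
set_option maxHeartbeats 1600000 in
lemma sum_p {m : ℕ} (σ : Equiv.Perm (Fin (m+1))) :
    ∑ p : Fin (m+2), (X 1 ^ desA (EE p σ) * X 0 ^ (m+1 - desA (EE p σ)) : MvPolynomial (Fin 2) ℚ)
      = (desA σ + 1) • (X 1 ^ desA σ * X 0 ^ (m+1-desA σ))
        + (m+1-desA σ) • (X 1 ^ (desA σ + 1) * X 0 ^ (m-desA σ)) := by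
  classical
  have hdm : desA σ ≤ m := desA_le σ
  have step : ∀ p : Fin (m+2),
      (X 1 ^ desA (EE p σ) * X 0 ^ (m+1 - desA (EE p σ)) : MvPolynomial (Fin 2) ℚ)
      = if condP p σ then X 1 ^ desA σ * X 0 ^ (m+1-desA σ)
        else X 1 ^ (desA σ + 1) * X 0 ^ (m-desA σ) := by
    intro p
    by_cases hc : condP p σ
    · rw [desA_EE_of_cond p σ hc, if_pos hc]
    · rw [desA_EE_of_not p σ hc, if_neg hc]
      have e : m + 1 - (desA σ + 1) = m - desA σ := by omega
      rw [e]
  rw [Finset.sum_congr rfl (fun p _ => step p), Finset.sum_ite, Finset.sum_const,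
    Finset.sum_const, card_condP σ]
  have h2 := Finset.card_filter_add_card_filter_not
    (s := (univ : Finset (Fin (m+2)))) (fun p : Fin (m+2) => condP p σ)
  rw [Finset.card_univ, Fintype.card_fin, card_condP σ] at h2
  have e2 : (univ.filter (fun p : Fin (m+2) => ¬ condP p σ)).card = m + 1 - desA σ := by omega
  rw [e2]

open MvPolynomial

lemma pd_pow0 (k : ℕ) : (pderiv (R := ℚ) (0 : Fin 2)) (X 0 ^ k) = k • X 0 ^ (k-1) := by
  rw [(pderiv (0:Fin 2)).leibniz_pow, pderiv_X_self, smul_eq_mul, mul_one]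

lemma pd_pow_ne (k : ℕ) : (pderiv (R := ℚ) (0 : Fin 2)) (X 1 ^ k) = 0 := by
  rw [(pderiv (0:Fin 2)).leibniz_pow, pderiv_X_of_ne (by decide), smul_zero, smul_zero]

lemma pd_pow1 (k : ℕ) : (pderiv (R := ℚ) (1 : Fin 2)) (X 1 ^ k) = k • X 1 ^ (k-1) := by
  rw [(pderiv (1:Fin 2)).leibniz_pow, pderiv_X_self, smul_eq_mul, mul_one]

lemma pd_pow_ne1 (k : ℕ) : (pderiv (R := ℚ) (1 : Fin 2)) (X 0 ^ k) = 0 := by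
  rw [(pderiv (1:Fin 2)).leibniz_pow, pderiv_X_of_ne (by decide), smul_zero, smul_zero]

lemma alg1 (d e : ℕ) :
    (X 0 * X 1) * Dop (X 1 ^ d * X 0 ^ e) + (X 0 + X 1) * (X 1 ^ d * X 0 ^ e)
      = (d+1) • (X 1 ^ d * X 0 ^ (e+1)) + (e+1) • (X 1 ^ (d+1) * X 0 ^ e) := by
  unfold Dop
  rw [pderiv_mul, pderiv_mul, pd_pow0 e, pd_pow_ne d, pd_pow1 d, pd_pow_ne1 e]
  rcases d with - | d' <;> rcases e with - | e' <;>
    simp [Nat.add_sub_cancel, nsmul_eq_mul] <;> push_cast <;> ring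

set_option maxHeartbeats 1600000 in
lemma Abiv_rec (m : ℕ) :
    Abiv (m+2) = (X 0 * X 1) * Dop (Abiv (m+1)) + (X 0 + X 1) * Abiv (m+1) := by
  classical
  have hR : (X 0 * X 1) * Dop (Abiv (m+1)) + (X 0 + X 1) * Abiv (m+1)
      = ∑ σ : Equiv.Perm (Fin (m+1)),
          ((X 0 * X 1) * Dop (X 1 ^ desA σ * X 0 ^ ascA σ)
            + (X 0 + X 1) * (X 1 ^ desA σ * X 0 ^ ascA σ)) := by
    rw [Abiv]
    unfold Dop
    rw [map_sum, map_sum, ← Finset.sum_add_distrib, Finset.mul_sum, Finset.mul_sum,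
      ← Finset.sum_add_distrib]
  have hstep : ∀ σ : Equiv.Perm (Fin (m+1)),
      (X 0 * X 1) * Dop (X 1 ^ desA σ * X 0 ^ ascA σ)
        + (X 0 + X 1) * (X 1 ^ desA σ * X 0 ^ ascA σ)
      = (desA σ + 1) • (X 1 ^ desA σ * X 0 ^ (m+1-desA σ))
        + (m+1-desA σ) • (X 1 ^ (desA σ + 1) * X 0 ^ (m-desA σ)) := by
    intro σ
    have hd := desA_le σ
    rw [ascA_eq σ, alg1 (desA σ) (m - desA σ)]
    have e : m - desA σ + 1 = m + 1 - desA σ := by omega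
    rw [e]
  have hL : Abiv (m+2) = ∑ x : Fin (m+2) × Equiv.Perm (Fin (m+1)),
      (X 1 ^ desA (EE x.1 x.2) * X 0 ^ (m + 1 - desA (EE x.1 x.2))) := by
    rw [Abiv]
    exact (Fintype.sum_bijective _ EE_bijective
      (fun x => X 1 ^ desA (EE x.1 x.2) * X 0 ^ (m + 1 - desA (EE x.1 x.2)))
      (fun π => X 1 ^ desA π * X 0 ^ ascA π)
      (fun x => by
        change X 1 ^ desA (EE x.1 x.2) * X 0 ^ (m + 1 - desA (EE x.1 x.2))
          = X 1 ^ desA (EE x.1 x.2) * X 0 ^ ascA (EE x.1 x.2)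
        rw [ascA_eq])).symm
  rw [hL, Fintype.sum_prod_type, Finset.sum_comm, hR,
    Finset.sum_congr rfl (fun σ _ => hstep σ)]
  exact Finset.sum_congr rfl (fun σ _ => sum_p σ)

def gam : ℕ → ℕ → ℕ
  | 0, i => if i = 0 then 1 else 0
  | 1, i => if i = 0 then 1 else 0
  | (n+2), i => (i+1) * gam (n+1) i +
      (match i with
       | 0 => 0
       | (j+1) => 2 * ((n+2) - 2*(j+1)) * gam (n+1) j)

lemma gam_step (k j : ℕ) : gam (k+2) (j+1)
    = (j+2) * gam (k+1) (j+1) + 2*((k+2) - 2*(j+1)) * gam (k+1) j := rfl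

lemma gam_step0 (k : ℕ) : gam (k+2) 0 = gam (k+1) 0 := by
  show (0+1) * gam (k+1) 0 + 0 = gam (k+1) 0
  omega

lemma gam_zero : ∀ n, gam n 0 = 1
  | 0 => rfl
  | 1 => rfl
  | (n+2) => by rw [gam_step0, gam_zero (n+1)]

lemma gam_supp : ∀ n i, gam n i ≠ 0 → 2*i ≤ n - 1
  | 0, i, h => by
    by_cases hi : i = 0
    · omega
    · exfalso; apply h; unfold gam; rw [if_neg hi]
  | 1, i, h => by
    by_cases hi : i = 0
    · omega
    · exfalso; apply h; unfold gam; rw [if_neg hi]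
  | (n+2), i, h => by
    rcases i with - | j
    · omega
    · rw [gam_step] at h
      by_cases h1 : gam (n+1) (j+1) = 0
      · rw [h1, mul_zero, zero_add] at h
        have h2 : gam (n+1) j ≠ 0 := by
          intro hz; rw [hz, mul_zero] at h; exact h rfl
        have h3 : (n+2) - 2*(j+1) ≠ 0 := by
          intro hz; rw [hz] at h; simp at h
        have h4 := gam_supp (n+1) j h2
        omega
      · have h4 := gam_supp (n+1) (j+1) h1
        omega

lemma gam_even : ∀ n j, Even (gam n (j+1))
  | 0, j => by unfold gam; simp
  | 1, j => by unfold gam; simp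
  | (n+2), j => by
    rw [gam_step]
    exact ((gam_even (n+1) j).mul_left _).add ((even_two.mul_right _).mul_right _)
lemma pd0_sum (k : ℕ) : (pderiv (R := ℚ) (0 : Fin 2)) ((X 0 + X 1) ^ k)
    = k • (X 0 + X 1) ^ (k-1) := by
  rw [(pderiv (0:Fin 2)).leibniz_pow, map_add, pderiv_X_self, pderiv_X_of_ne (by decide),
    add_zero, smul_eq_mul, mul_one]

lemma pd1_sum (k : ℕ) : (pderiv (R := ℚ) (1 : Fin 2)) ((X 0 + X 1) ^ k)
    = k • (X 0 + X 1) ^ (k-1) := by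
  rw [(pderiv (1:Fin 2)).leibniz_pow, map_add, pderiv_X_self, pderiv_X_of_ne (by decide),
    zero_add, smul_eq_mul, mul_one]

lemma alg2 (i e : ℕ) :
    (X 0 * X 1) * Dop ((X 0 * X 1) ^ i * (X 0 + X 1) ^ e)
      + (X 0 + X 1) * ((X 0 * X 1) ^ i * (X 0 + X 1) ^ e)
    = (i+1) • ((X 0 * X 1) ^ i * (X 0 + X 1) ^ (e+1))
      + (2*e) • ((X 0 * X 1) ^ (i+1) * (X 0 + X 1) ^ (e-1)) := by
  unfold Dop
  rw [mul_pow, mul_assoc, pderiv_mul, pderiv_mul, pderiv_mul, pderiv_mul,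
    pd_pow0 i, pd_pow_ne i, pd_pow1 i, pd_pow_ne1 i, pd0_sum e, pd1_sum e]
  rcases i with - | i' <;> rcases e with - | e' <;>
    simp [Nat.add_sub_cancel, nsmul_eq_mul, mul_pow] <;> push_cast <;> ring

lemma Abiv_one : Abiv 1 = 1 := by
  classical
  rw [Abiv]
  have h : ∀ π : Equiv.Perm (Fin 1),
      (X 1 ^ desA π * X 0 ^ ascA π : MvPolynomial (Fin 2) ℚ) = 1 := by
    intro π
    have h1 : desA π = 0 := by unfold desA; simp
    have h2 : ascA π = 0 := by unfold ascA; simp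
    rw [h1, h2, pow_zero, pow_zero, one_mul]
  rw [Finset.sum_congr rfl (fun π _ => h π), Finset.sum_const, Finset.card_univ,
    Fintype.card_perm, Fintype.card_fin]
  simp

set_option maxHeartbeats 1600000 in
lemma Abiv_expand (m : ℕ) : Abiv (m+1) = ∑ i ∈ Finset.range (m/2 + 1),
    (gam (m+1) i : MvPolynomial (Fin 2) ℚ) * ((X 0 * X 1)^i * (X 0 + X 1)^(m-2*i)) := by
  classical
  induction m with
  | zero =>
    rw [Abiv_one, Finset.sum_range_one]
    simp [gam_zero 1]
  | succ k IH =>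
    set K := k/2 + 1 with hKdef
    set B' : ℕ → MvPolynomial (Fin 2) ℚ :=
      fun i => (X 0 * X 1)^i * (X 0 + X 1)^(k+1-2*i) with hB'
    set hcoef : ℕ → ℕ :=
      fun i => if i = 0 then 0 else 2*((k+2)-2*i) * gam (k+1) (i-1) with hhc
    have step1 : Abiv (k+2) = ∑ i ∈ Finset.range K,
        gam (k+1) i • ((X 0 * X 1) * Dop ((X 0 * X 1)^i * (X 0 + X 1)^(k-2*i))
          + (X 0 + X 1) * ((X 0 * X 1)^i * (X 0 + X 1)^(k-2*i))) := by
      rw [Abiv_rec k, IH]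
      have hsm : ∑ i ∈ Finset.range K,
            (gam (k+1) i : MvPolynomial (Fin 2) ℚ) * ((X 0 * X 1)^i * (X 0 + X 1)^(k-2*i))
          = ∑ i ∈ Finset.range K, gam (k+1) i • ((X 0 * X 1)^i * (X 0 + X 1)^(k-2*i)) :=
        Finset.sum_congr rfl (fun i _ => (nsmul_eq_mul _ _).symm)
      rw [hsm]
      unfold Dop
      rw [map_sum, map_sum, ← Finset.sum_add_distrib, Finset.mul_sum, Finset.mul_sum,
        ← Finset.sum_add_distrib]
      apply Finset.sum_congr rfl
      intro i _
      simp only [map_nsmul, smul_add, mul_add, mul_smul_comm]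
      try abel
    have step2 : Abiv (k+2) = ∑ i ∈ Finset.range K, ((i+1) * gam (k+1) i) • B' i
        + ∑ i ∈ Finset.range K, hcoef (i+1) • B' (i+1) := by
      rw [step1, ← Finset.sum_add_distrib]
      apply Finset.sum_congr rfl
      intro i hi
      have h2i : 2*i ≤ k := by have := Finset.mem_range.mp hi; omega
      rw [alg2 i (k-2*i)]
      have e1 : k-2*i+1 = k+1-2*i := by omega
      have e2 : k-2*i-1 = k+1-2*(i+1) := by omega
      rw [e1, e2, smul_add, smul_smul, smul_smul]
      have c1 : gam (k+1) i * (i+1) = (i+1) * gam (k+1) i := Nat.mul_comm _ _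
      have c2 : gam (k+1) i * (2*(k-2*i)) = hcoef (i+1) := by
        rw [hhc]
        simp only [Nat.add_sub_cancel, if_neg (Nat.succ_ne_zero i)]
        have : (k+2)-2*(i+1) = k - 2*i := by omega
        rw [this, Nat.mul_comm]
      rw [c1, c2, hB']
    have hgamK : gam (k+1) K = 0 := by
      by_contra h
      have := gam_supp (k+1) K h
      omega
    have step3 : Abiv (k+2) = ∑ i ∈ Finset.range (K+1), ((i+1) * gam (k+1) i) • B' i
        + ∑ i ∈ Finset.range (K+1), hcoef i • B' i := by
      rw [step2, Finset.sum_range_succ ((fun i => ((i+1) * gam (k+1) i) • B' i)) K,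
        hgamK, Nat.mul_zero, zero_smul, add_zero,
        Finset.sum_range_succ' (fun i => hcoef i • B' i) K]
      have : hcoef 0 = 0 := rfl
      rw [this, zero_smul, add_zero]
    have step4 : Abiv (k+2) = ∑ i ∈ Finset.range (K+1), gam (k+2) i • B' i := by
      rw [step3, ← Finset.sum_add_distrib]
      apply Finset.sum_congr rfl
      intro i _
      rw [← add_smul]
      congr 1
      rcases i with - | j
      · rw [gam_step0]
        simp [hhc]
      · rw [gam_step, hhc]
        simp only [Nat.succ_ne_zero, if_false, Nat.add_sub_cancel]
        try ring
    rw [step4]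
    -- adjust range to (k+1)/2 + 1 and smul to cast-mul
    have hKK : (k+1)/2 + 1 = K + 1 ∨ (k+1)/2 + 1 = K := by omega
    have hconv : ∀ s : Finset ℕ, (∑ i ∈ s, gam (k+2) i • B' i)
        = ∑ i ∈ s, (gam (k+2) i : MvPolynomial (Fin 2) ℚ) * B' i :=
      fun s => Finset.sum_congr rfl (fun i _ => (nsmul_eq_mul _ _))
    rcases hKK with hK | hK
    · rw [hK, hconv]
    · rw [Finset.sum_range_succ, hK]
      have hz : gam (k+2) K = 0 := by
        by_contra h
        have := gam_supp (k+2) K h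
        omega
      rw [hz, zero_smul, add_zero, hconv]

theorem eulerian_gamma_recurrence :
    ∃ γ : ℕ → ℤ → ℕ,
      (∀ n : ℕ, ∀ i : ℤ, i < 0 → γ n i = 0) ∧
      (∀ n : ℕ, 1 ≤ n → Abiv n =
        ∑ i ∈ Finset.range ((n-1)/2 + 1), (γ n (i : ℤ) : MvPolynomial (Fin 2) ℚ) *
          ((MvPolynomial.X 0 * MvPolynomial.X 1)^i *
            (MvPolynomial.X 0 + MvPolynomial.X 1)^(n - 1 - 2*i))) ∧
      (∀ n : ℕ, 1 ≤ n → ∀ i : ℤ,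
        (γ (n+1) i : ℤ) = (i+1) * γ n i + 2*((n : ℤ) + 1 - 2*i) * γ n (i-1)) ∧
      (∀ n : ℕ, 1 ≤ n → γ n 0 = 1) ∧
      (∀ n : ℕ, ∀ i : ℤ, 1 ≤ i → Even (γ n i)) := by
  classical
  refine ⟨fun n i => if 0 ≤ i then gam n i.toNat else 0, ?_, ?_, ?_, ?_, ?_⟩
  · intro n i hi
    beta_reduce
    rw [if_neg (by omega)]
  · intro n hn
    beta_reduce
    obtain ⟨m, rfl⟩ : ∃ m, n = m + 1 := ⟨n - 1, by omega⟩
    rw [Abiv_expand m]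
    refine Finset.sum_congr rfl (fun i _ => ?_)
    rw [if_pos (Int.natCast_nonneg i), Int.toNat_natCast]
    norm_num
  · intro n hn i
    beta_reduce
    obtain ⟨k, rfl⟩ : ∃ k, n = k + 1 := ⟨n - 1, by omega⟩
    rcases lt_trichotomy i 0 with hi | hi | hi
    · rw [if_neg (by omega), if_neg (by omega), if_neg (by omega)]
      simp
    · subst hi
      rw [if_pos le_rfl, if_pos le_rfl, if_neg (by omega)]
      simp only [Int.toNat_zero, gam_step0 k]
      push_cast
      ring
    · obtain ⟨j, rfl⟩ : ∃ j : ℕ, i = (j:ℤ)+1 := ⟨(i-1).toNat, by omega⟩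
      rw [if_pos (by omega), if_pos (by omega), if_pos (by omega)]
      have t1 : ((j:ℤ)+1).toNat = j+1 := by omega
      have t2 : ((j:ℤ)+1-1).toNat = j := by omega
      rw [t1, t2, gam_step k j]
      by_cases hz : gam (k+1) j = 0
      · rw [hz]
        push_cast
        ring
      · have hsupp := gam_supp (k+1) j hz
        have hle : 2*(j+1) ≤ k+2 := by omega
        push_cast [Nat.cast_sub hle]
        ring
  · intro n hn
    beta_reduce
    simp [gam_zero n]
  · intro n i hi
    beta_reduce
    rw [if_pos (by omega)]
    obtain ⟨j, hj⟩ : ∃ j, i.toNat = j+1 := ⟨i.toNat - 1, by omega⟩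
    rw [hj]
    exact gam_even n j
end

section
/- For n ≥ 2, let B_n^+ (resp. B_n^-) be the signed permutations of [n] with even (resp. odd) type-B length inv_B. The polynomials B_n^±(s,t) = Σ_{π ∈ B_n^±} t^{des_B(π)} s^{asc_B(π)} satisfy B_n^+(s,t) = s·B_{n-1}^+(s,t) + t·B_{n-1}^-(s,t) + st·(∂/∂s + ∂/∂t) B_{n-1}(s,t), and the analogous recurrence with + and - exchanged. -/
open Finset

/-! Every signed permutation of `[m + 1]` arises exactly once by inserting `m + 1` or
`-(m + 1)` into one of the slots `k = 0, …, m` of a signed permutation `v` of `[m]` (slot `k`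
lies between the letters `v k` and `v (k + 1)`, where `v 0 = 0`). For `k < m` both signs keep
`des_B` if slot `k` is a descent of `v` and raise it by one otherwise; in the last slot `m + 1`
keeps `des_B` and `-(m + 1)` raises it. The length grows by `m - k` resp. `m + k + 1`, so for
`k < m` exactly one sign gives the prescribed parity, while in the last slot `m + 1` keeps the
parity of `v` and `-(m + 1)` flips it. With `d = des_B v`, the slots `k < m` thus contribute
`(d s + (m - d) t) t^d s^(m-d) = st (∂/∂s + ∂/∂t) (t^d s^(m-d))`, and the last slot gives
`s t^d s^(m-d)` to the parity class of `v` and `t t^d s^(m-d)` to the other one. -/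

open MvPolynomial

lemma Fin.card_filter_castSucc_lt {m : ℕ} (k : Fin (m + 1)) :
    #{j : Fin m | j.castSucc < k} = k := by
  simp [Fin.lt_def, Fin.card_filter_val_lt, Nat.lt_succ_iff.1 k.2]

lemma Fin.card_filter_le_castSucc {m : ℕ} (k : Fin (m + 1)) :
    #{j : Fin m | k ≤ j.castSucc} = m - k := by
  simp only [← not_lt, filter_not, card_sdiff, card_univ, Fintype.card_fin, inter_univ,
    Fin.card_filter_castSucc_lt]

lemma Fin.card_filter_pairs_succAbove {α : Type*} {m : ℕ} (R : α → α → Prop)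
    [DecidableRel R] (b : Fin (m + 1) → α) (k : Fin (m + 1)) :
    #{p : Fin (m + 1) × Fin (m + 1) | p.1 < p.2 ∧ R (b p.1) (b p.2)}
      = #{p : Fin m × Fin m | p.1 < p.2 ∧ R (b (k.succAbove p.1)) (b (k.succAbove p.2))}
        + #{j : Fin m | j.castSucc < k ∧ R (b (k.succAbove j)) (b k)}
        + #{j : Fin m | k ≤ j.castSucc ∧ R (b k) (b (k.succAbove j))} := by
  simp only [card_filter, Fintype.sum_prod_type]
  rw [Fin.sum_univ_succAbove _ k]
  simp only [Fin.sum_univ_succAbove _ k, lt_irrefl, false_and, if_false, zero_add,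
    Fin.succAbove_lt_succAbove_iff, Fin.lt_succAbove_iff_le_castSucc,
    Fin.succAbove_lt_iff_castSucc_lt, sum_add_distrib]
  ring

/-- Inserting `x` between `f p` and `f (p + 1)` replaces that adjacent pair by `(f p, x)` and
`(x, f (p + 1))`; all other adjacent pairs are kept. -/
lemma card_descents_insert {f g : ℕ → ℤ} {x : ℤ} {p m : ℕ} (hpm : p ≤ m)
    (hg : ∀ i, g i = if i ≤ p then f i else if i = p + 1 then x else f (i - 1)) :
    #{i ∈ range (m + 1) | g (i + 1) < g i} + (if p < m ∧ f (p + 1) < f p then 1 else 0)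
      = #{i ∈ range m | f (i + 1) < f i} + (if x < f p then 1 else 0)
        + (if p < m ∧ f (p + 1) < x then 1 else 0) := by
  simp only [card_filter]
  induction m, hpm using Nat.le_induction with
  | base =>
    have hlow : ∑ i ∈ range p, (if g (i + 1) < g i then 1 else 0)
        = ∑ i ∈ range p, (if f (i + 1) < f i then 1 else 0) :=
      sum_congr rfl fun i hi ↦ by
        rw [mem_range] at hi
        simp only [hg, show i + 1 ≤ p by omega, show i ≤ p by omega, if_true]
    rw [sum_range_succ, hlow, hg (p + 1), hg p]
    simp
  | succ m hpm ih =>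
    rw [sum_range_succ (fun i ↦ if g (i + 1) < g i then 1 else 0) (m + 1),
      sum_range_succ (fun i ↦ if f (i + 1) < f i then 1 else 0) m, hg (m + 1 + 1), hg (m + 1)]
    rcases hpm.eq_or_lt with rfl | hlt
    · simp only [show ¬ p + 1 + 1 ≤ p by omega, show ¬ p + 1 ≤ p by omega,
        show p + 1 + 1 ≠ p + 1 by omega, if_false, if_true, lt_irrefl, false_and, lt_add_one,
        true_and, add_zero, Nat.add_sub_cancel] at ih ⊢
      omega
    · simp only [show ¬ m + 1 + 1 ≤ p by omega, show ¬ m + 1 ≤ p by omega,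
        show m + 1 + 1 ≠ p + 1 by omega, show m + 1 ≠ p + 1 by omega, if_false, hlt,
        Nat.lt_succ_of_lt hlt, true_and, Nat.add_sub_cancel] at ih ⊢
      omega

lemma alternating_add_iff {P : ℕ → Prop} (hP : ∀ a, P (a + 1) ↔ ¬ P a) (a b : ℕ) :
    P (a + b) ↔ (P a ↔ Even b) := by
  induction b with
  | zero => simp
  | succ b ih => rw [← add_assoc, hP, ih, Nat.even_add_one]; tauto

lemma sum_bool_ite_of_iff_not {M : Type*} [AddCommMonoid M] {p : Bool → Prop} [DecidablePred p]
    (hp : p true ↔ ¬ p false) (c : M) : ∑ ε, (if p ε then c else 0) = c := by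
  by_cases h : p false <;> simp [h, hp]

lemma mul_Dop_monomial (d e : ℕ) :
    (X 0 * X 1 * Dop (X 1 ^ d * X 0 ^ e) : MvPolynomial (Fin 2) ℚ)
      = d • (X 0 * (X 1 ^ d * X 0 ^ e)) + e • (X 1 * (X 1 ^ d * X 0 ^ e)) := by
  rcases d with _ | d <;> rcases e with _ | e <;>
    simp [Dop] <;> ring

namespace SignedPerm

variable {m n : ℕ}

def letter (w : SignedPerm n) (i : Fin n) : ℤ :=
  if w.2 i then -((w.1 i : ℤ) + 1) else (w.1 i : ℤ) + 1

lemma bw_succ (w : SignedPerm n) (i : Fin n) : bw w (i + 1) = w.letter i := by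
  simp [bw, letter]

lemma bw_of_lt (w : SignedPerm n) {i : ℕ} (hi : n < i) : bw w i = 0 := by
  simp [bw, show ¬ i ≤ n by omega]

lemma abs_letter_le (w : SignedPerm n) (i : Fin n) : |w.letter i| ≤ n := by
  have := (w.1 i).2
  unfold letter; split_ifs <;> rw [abs_le] <;> constructor <;> omega

lemma abs_bw_le (w : SignedPerm n) (i : ℕ) : |bw w i| ≤ n := by
  rcases i with _ | j
  · simp [bw]
  rcases lt_or_ge j n with hj | hj
  · exact (bw_succ w ⟨j, hj⟩).symm ▸ w.abs_letter_le _
  · simp [bw_of_lt w (Nat.lt_succ_of_le hj)]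

lemma desB_eq_card_fin (w : SignedPerm n) : desB w = #{i : Fin n | bw w (i + 1) < bw w i} := by
  rw [desB, card_filter, card_filter,
    Fin.sum_univ_eq_sum_range (fun i ↦ if bw w (i + 1) < bw w i then 1 else 0)]

lemma desB_le (w : SignedPerm n) : desB w ≤ n :=
  (card_filter_le _ _).trans (card_range n).le

lemma insertNth_last_castSucc_injective (σ : Equiv.Perm (Fin m)) (k : Fin (m + 1)) :
    Function.Injective (Fin.insertNth k (Fin.last m) (Fin.castSucc ∘ σ)) := by
  intro a b h
  induction a using Fin.succAboveCases k <;> induction b using Fin.succAboveCases k <;>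
    simp_all [Fin.castSucc_ne_last, (Fin.castSucc_ne_last _).symm]

/-- `v` with the letter `m + 1` (negated if `ε`) inserted at position `k` of its word. -/
noncomputable def insertMax (v : SignedPerm m) (k : Fin (m + 1)) (ε : Bool) :
    SignedPerm (m + 1) :=
  (Equiv.ofBijective _ (Finite.injective_iff_bijective.1 (insertNth_last_castSucc_injective v.1 k)),
    Fin.insertNth k ε v.2)

def maxLetter (m : ℕ) (ε : Bool) : ℤ := if ε then -((m : ℤ) + 1) else (m : ℤ) + 1

@[simp]
lemma letter_insertMax_self (v : SignedPerm m) (k : Fin (m + 1)) (ε : Bool) :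
    (insertMax v k ε).letter k = maxLetter m ε := by
  simp [letter, insertMax, maxLetter]

@[simp]
lemma letter_insertMax_succAbove (v : SignedPerm m) (k : Fin (m + 1)) (ε : Bool) (j : Fin m) :
    (insertMax v k ε).letter (k.succAbove j) = v.letter j := by
  simp [letter, insertMax]

lemma insertMax_injective :
    Function.Injective fun x : SignedPerm m × Fin (m + 1) × Bool ↦
      insertMax x.1 x.2.1 x.2.2 := by
  rintro ⟨⟨σ, c⟩, k, ε⟩ ⟨⟨σ', c'⟩, k', ε'⟩ h
  simp only [insertMax, Prod.mk.injEq, Equiv.ext_iff, Equiv.ofBijective_apply] at h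
  obtain ⟨hσ, hc⟩ := h
  obtain rfl : k = k' := by
    by_contra hk
    obtain ⟨j, rfl⟩ := Fin.exists_succAbove_eq hk
    simpa using (hσ (k'.succAbove j)).symm
  simp only [Fin.insertNth_inj] at hc
  have hσ' : σ = σ' := Equiv.ext fun j ↦ by simpa using hσ (k.succAbove j)
  simp_all

lemma insertMax_bijective :
    Function.Bijective fun x : SignedPerm m × Fin (m + 1) × Bool ↦
      insertMax x.1 x.2.1 x.2.2 := by
  refine (Fintype.bijective_iff_injective_and_card _).2 ⟨insertMax_injective, ?_⟩
  simp only [Fintype.card_prod, Fintype.card_perm, Fintype.card_fun, Fintype.card_fin,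
    Fintype.card_bool, Nat.factorial_succ]
  ring

lemma sum_eq_sum_insertMax {M : Type*} [AddCommMonoid M] (G : SignedPerm (m + 1) → M) :
    ∑ w, G w =
      ∑ v : SignedPerm m, ∑ k : Fin (m + 1), ∑ ε : Bool, G (insertMax v k ε) := by
  rw [← Fintype.sum_bijective _ insertMax_bijective _ G fun _ ↦ rfl]
  simp only [Fintype.sum_prod_type]

lemma bw_insertMax (v : SignedPerm m) (k : Fin (m + 1)) (ε : Bool) (i : ℕ) :
    bw (insertMax v k ε) i
      = if i ≤ k then bw v i else if i = k + 1 then maxLetter m ε else bw v (i - 1) := by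
  have hk := k.2
  rcases i with _ | j
  · simp [bw]
  rcases lt_or_ge j (m + 1) with hj | hj
  swap
  · rw [bw_of_lt _ (by omega), bw_of_lt _ (by omega : m < j + 1 - 1), if_neg (by omega),
      if_neg (by omega)]
  obtain ⟨J, rfl⟩ : ∃ J : Fin (m + 1), J.val = j := ⟨⟨j, hj⟩, rfl⟩
  rw [bw_succ]
  obtain rfl | ⟨j, rfl⟩ := k.eq_self_or_eq_succAbove J
  · simp
  rw [letter_insertMax_succAbove, ← bw_succ]
  rcases lt_or_ge j.castSucc k with h | h
  · rw [Fin.succAbove_of_castSucc_lt _ _ h, if_pos (by simpa [Fin.lt_def] using h)]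
    rfl
  · rw [Fin.le_def, Fin.val_castSucc] at h
    rw [Fin.succAbove_of_le_castSucc _ _ h, Fin.val_succ, if_neg (by omega), if_neg (by omega)]
    rfl

lemma desB_insertMax (v : SignedPerm m) (k : Fin (m + 1)) (ε : Bool) :
    desB (insertMax v k ε) = if (k < m ∧ bw v (k + 1) < bw v k) ∨ (k = m ∧ ε = false)
      then desB v else desB v + 1 := by
  have hk := k.2
  have key := card_descents_insert (x := maxLetter m ε) (m := m) (by omega) (bw_insertMax v k ε)
  have h1 := abs_le.1 (abs_bw_le v k)
  have h2 := abs_le.1 (abs_bw_le v (k + 1))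
  unfold desB
  cases ε <;> simp only [maxLetter, Bool.false_eq_true, Bool.true_eq_false, if_true, if_false,
    and_true, and_false, or_false] at key ⊢ <;> split_ifs at key ⊢ <;> omega

lemma invB_eq_letter (w : SignedPerm n) :
    invB w = #{p : Fin n × Fin n | p.1 < p.2 ∧ w.letter p.2 < w.letter p.1}
      + #{p : Fin n × Fin n | p.1 < p.2 ∧ w.letter p.2 < -w.letter p.1}
      + #{i | w.letter i < 0} := by
  simp only [invB, bw_succ]

lemma invB_insertMax (v : SignedPerm m) (k : Fin (m + 1)) (ε : Bool) :
    invB (insertMax v k ε) = invB v + if ε then m + k + 1 else m - k := by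
  have hlt (j : Fin m) : v.letter j < m + 1 := by linarith [(abs_le.1 (v.abs_letter_le j)).2]
  have hgt (j : Fin m) : -(m + 1) < v.letter j := by linarith [(abs_le.1 (v.abs_letter_le j)).1]
  rw [invB_eq_letter, invB_eq_letter, Fin.card_filter_pairs_succAbove (fun x y ↦ y < x) _ k,
    Fin.card_filter_pairs_succAbove (fun x y ↦ y < -x) _ k]
  simp only [card_filter]
  rw [Fin.sum_univ_succAbove _ k]
  have hneg (j : Fin m) : -(m + 1) < -v.letter j := neg_lt_neg (hlt j)
  have hneg' (j : Fin m) : -v.letter j < m + 1 := neg_lt.1 (hgt j)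
  have hpos : (0 : ℤ) < m + 1 := by positivity
  -- `±(m + 1)` exceeds every letter of `v` in absolute value: `ε` alone decides each condition.
  cases ε <;> simp only [letter_insertMax_self, letter_insertMax_succAbove, maxLetter,
    Bool.false_eq_true, if_true, if_false, neg_neg, hlt, hgt, hneg, (hlt _).asymm, (hgt _).asymm,
    (hneg' _).asymm, hpos.asymm, neg_neg_iff_pos.2 hpos, and_true, and_false, ← card_filter,
    sum_const_zero, Fin.card_filter_castSucc_lt, Fin.card_filter_le_castSucc] <;> omega

noncomputable def weight (w : SignedPerm n) : MvPolynomial (Fin 2) ℚ :=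
  X 1 ^ desB w * X 0 ^ (n - desB w)

lemma weight_insertMax (v : SignedPerm m) (k : Fin (m + 1)) (ε : Bool) :
    (insertMax v k ε).weight = if (k < m ∧ bw v (k + 1) < bw v k) ∨ (k = m ∧ ε = false)
      then X 0 * v.weight else X 1 * v.weight := by
  have := desB_le v
  rw [weight, weight, desB_insertMax]
  split_ifs
  · rw [show m + 1 - desB v = m - desB v + 1 by omega]; ring
  · rw [show m + 1 - (desB v + 1) = m - desB v by omega]; ring

lemma parity_invB_insertMax {P : ℕ → Prop} (hP : ∀ a, P (a + 1) ↔ ¬ P a) (v : SignedPerm m)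
    (k : Fin (m + 1)) : P (invB (insertMax v k true)) ↔ ¬ P (invB (insertMax v k false)) := by
  have hk := k.2
  have : Even (m + k + 1) ↔ ¬ Even (m - k) := by rw [Nat.even_iff, Nat.even_iff]; omega
  rw [invB_insertMax, invB_insertMax, alternating_add_iff hP, alternating_add_iff hP]
  simp only [if_true, Bool.false_eq_true, if_false, this]
  tauto

lemma sum_ite_weight_insertMax {P : ℕ → Prop} [DecidablePred P]
    (hP : ∀ a, P (a + 1) ↔ ¬ P a) (v : SignedPerm m) :
    ∑ k, ∑ ε, (if P (invB (insertMax v k ε)) then (insertMax v k ε).weight else 0)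
      = X 0 * (if P (invB v) then v.weight else 0) + X 1 * (if ¬ P (invB v) then v.weight else 0)
        + X 0 * X 1 * Dop v.weight := by
  have hmid (i : Fin m) : ∑ ε, (if P (invB (insertMax v i.castSucc ε))
      then (insertMax v i.castSucc ε).weight else 0)
        = if bw v (i + 1) < bw v i then X 0 * v.weight else X 1 * v.weight := by
    have (ε : Bool) : (insertMax v i.castSucc ε).weight
        = if bw v (i + 1) < bw v i then X 0 * v.weight else X 1 * v.weight := by
      simp [weight_insertMax, i.2, i.2.ne]
    simp_rw [this]
    exact sum_bool_ite_of_iff_not (parity_invB_insertMax hP v _) _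
  have hlast : ∑ ε, (if P (invB (insertMax v (Fin.last m) ε))
      then (insertMax v (Fin.last m) ε).weight else 0)
        = X 0 * (if P (invB v) then v.weight else 0)
          + X 1 * (if ¬ P (invB v) then v.weight else 0) := by
    have hkeep : invB (insertMax v (Fin.last m) false) = invB v := by simp [invB_insertMax]
    have hflip := parity_invB_insertMax hP v (Fin.last m)
    rw [hkeep] at hflip
    by_cases h : P (invB v) <;> simp [weight_insertMax, hkeep, hflip, h]
  have hasc : #{i : Fin m | ¬ bw v (i + 1) < bw v i} = m - desB v := by
    rw [filter_not, card_sdiff, inter_univ, ← desB_eq_card_fin, card_univ, Fintype.card_fin]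
  rw [Fin.sum_univ_castSucc, sum_congr rfl fun i _ ↦ hmid i, hlast, sum_ite, sum_const, sum_const,
    ← desB_eq_card_fin, hasc, weight, mul_Dop_monomial]
  abel

lemma sum_filter_weight_succ {P : ℕ → Prop} [DecidablePred P] (hP : ∀ a, P (a + 1) ↔ ¬ P a)
    (m : ℕ) :
    ∑ w : SignedPerm (m + 1) with P (invB w), w.weight
      = X 0 * ∑ v : SignedPerm m with P (invB v), v.weight
        + X 1 * ∑ v : SignedPerm m with ¬ P (invB v), v.weight
        + X 0 * X 1 * Dop (Bbiv m) := by
  have hDop : Dop (Bbiv m) = ∑ v : SignedPerm m, Dop v.weight := by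
    simp only [Dop, Bbiv, weight, map_sum, sum_add_distrib]
  rw [sum_filter, sum_eq_sum_insertMax, sum_filter, sum_filter, hDop, mul_sum, mul_sum, mul_sum,
    ← sum_add_distrib, ← sum_add_distrib]
  exact sum_congr rfl fun v _ ↦ sum_ite_weight_insertMax hP v

end SignedPerm

theorem typeB_plus_minus_recurrence (n : ℕ) (hn : 2 ≤ n) :
    BbivP n = MvPolynomial.X 0 * BbivP (n-1) + MvPolynomial.X 1 * BbivM (n-1)
      + MvPolynomial.X 0 * MvPolynomial.X 1 * Dop (Bbiv (n-1)) ∧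
    BbivM n = MvPolynomial.X 0 * BbivM (n-1) + MvPolynomial.X 1 * BbivP (n-1)
      + MvPolynomial.X 0 * MvPolynomial.X 1 * Dop (Bbiv (n-1)) := by
  obtain ⟨m, rfl⟩ : ∃ m, n = m + 1 := ⟨n - 1, by omega⟩
  rw [Nat.add_sub_cancel]
  refine ⟨SignedPerm.sum_filter_weight_succ (fun _ ↦ Nat.even_add_one) m, ?_⟩
  convert SignedPerm.sum_filter_weight_succ (P := fun a ↦ ¬ Even a)
    (fun _ ↦ not_congr Nat.even_add_one) m using 4
  all_goals simp only [BbivP, BbivM, SignedPerm.weight, not_not]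
end
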